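/- Let S and R be rings, M an (S,R)-bimodule, and T the generalized 2-by-2 upper triangular matrix ring with underlying set {(s, m, r) : s ∈ S, m ∈ M, r ∈ R}, componentwise addition, and multiplication (s, m, r)(s', m', r') = (ss', s·m' + m·r', rr'). Let J = {(s, m, r) ∈ T : s ∈ I, m ∈ N, r ∈ L} be an ideal of T, where I is an ideal of S, L is an ideal of R, and N is an (S,R)-subbimodule of M with I·M ⊆ N and M·L ⊆ N. Then J is a prime ideal of T if and only if N = M and either (I = S and L is a prime ideal of R) or (L = R and I is a prime ideal of S). -/
import Mathlib


open TwoSidedIdeal MulOpposite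

/-- The generalized 2-by-2 upper triangular matrix ring `[[S, M], [0, R]]`, realized on
the underlying set `S × M × R`. -/
abbrev Tri (S M R : Type*) := S × M × R

section TriRing

variable {S M R : Type*} [Ring S] [Ring R] [AddCommGroup M]
  [Module S M] [Module Rᵐᵒᵖ M] [SMulCommClass S Rᵐᵒᵖ M]

instance : Ring (Tri S M R) :=
  { (inferInstance : AddCommGroup (S × M × R)) with
    mul := fun x y => (x.1 * y.1, x.1 • y.2.1 + op y.2.2 • x.2.1, x.2.2 * y.2.2)
    one := (1, 0, 1)
    mul_assoc := fun x y z => by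
      refine Prod.ext (mul_assoc _ _ _) (Prod.ext ?_ (mul_assoc _ _ _))
      show (x.1 * y.1) • z.2.1 + op z.2.2 • (x.1 • y.2.1 + op y.2.2 • x.2.1) =
        x.1 • (y.1 • z.2.1 + op z.2.2 • y.2.1) + op (y.2.2 * z.2.2) • x.2.1
      rw [mul_smul, smul_add, smul_add, ← smul_comm x.1 (op z.2.2) y.2.1, op_mul, mul_smul,
        add_assoc]
    one_mul := fun x => by
      refine Prod.ext (one_mul _) (Prod.ext ?_ (one_mul _))
      show (1 : S) • x.2.1 + op x.2.2 • (0 : M) = x.2.1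
      rw [one_smul, smul_zero, add_zero]
    mul_one := fun x => by
      refine Prod.ext (mul_one _) (Prod.ext ?_ (mul_one _))
      show x.1 • (0 : M) + op (1 : R) • x.2.1 = x.2.1
      rw [smul_zero, op_one, one_smul, zero_add]
    left_distrib := fun x y z => by
      refine Prod.ext (mul_add _ _ _) (Prod.ext ?_ (mul_add _ _ _))
      show x.1 • (y.2.1 + z.2.1) + op (y.2.2 + z.2.2) • x.2.1 =
        (x.1 • y.2.1 + op y.2.2 • x.2.1) + (x.1 • z.2.1 + op z.2.2 • x.2.1)
      rw [smul_add, op_add, add_smul]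
      abel
    right_distrib := fun x y z => by
      refine Prod.ext (add_mul _ _ _) (Prod.ext ?_ (add_mul _ _ _))
      show (x.1 + y.1) • z.2.1 + op z.2.2 • (x.2.1 + y.2.1) =
        (x.1 • z.2.1 + op z.2.2 • x.2.1) + (y.1 • z.2.1 + op z.2.2 • y.2.1)
      rw [add_smul, smul_add]
      abel
    zero_mul := fun x => by
      refine Prod.ext (zero_mul _) (Prod.ext ?_ (zero_mul _))
      show (0 : S) • x.2.1 + op x.2.2 • (0 : M) = 0
      rw [zero_smul, smul_zero, add_zero]
    mul_zero := fun x => by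
      refine Prod.ext (mul_zero _) (Prod.ext ?_ (mul_zero _))
      show x.1 • (0 : M) + op (0 : R) • x.2.1 = 0
      rw [smul_zero, op_zero, zero_smul, add_zero] }

end TriRing

/-- A two-sided ideal `P` is prime if it is proper and `IJ ⊆ P` implies `I ⊆ P` or `J ⊆ P`. -/
def IsPrimeTSI {A : Type*} [Ring A] (P : TwoSidedIdeal A) : Prop :=
  P ≠ ⊤ ∧ ∀ I J : TwoSidedIdeal A, (∀ a ∈ I, ∀ b ∈ J, a * b ∈ P) → I ≤ P ∨ J ≤ P

section Aux

variable {S M R : Type*} [Ring S] [Ring R] [AddCommGroup M]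
  [Module S M] [Module Rᵐᵒᵖ M] [SMulCommClass S Rᵐᵒᵖ M]

lemma tri_mul (x y : Tri S M R) :
    x * y = (x.1 * y.1, x.1 • y.2.1 + op y.2.2 • x.2.1, x.2.2 * y.2.2) := rfl

/-- The ideal `[[P, M], [0, Q]]` of `Tri S M R`. -/
def triIdeal (P : TwoSidedIdeal S) (Q : TwoSidedIdeal R) : TwoSidedIdeal (Tri S M R) :=
  TwoSidedIdeal.mk' {x | x.1 ∈ P ∧ x.2.2 ∈ Q}
    ⟨P.zero_mem, Q.zero_mem⟩
    (fun hx hy => ⟨P.add_mem hx.1 hy.1, Q.add_mem hx.2 hy.2⟩)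
    (fun hx => ⟨P.neg_mem hx.1, Q.neg_mem hx.2⟩)
    (fun hy => ⟨P.mul_mem_left _ _ hy.1, Q.mul_mem_left _ _ hy.2⟩)
    (fun hx => ⟨P.mul_mem_right _ _ hx.1, Q.mul_mem_right _ _ hx.2⟩)

lemma mem_triIdeal {P : TwoSidedIdeal S} {Q : TwoSidedIdeal R} {x : Tri S M R} :
    x ∈ triIdeal (M := M) P Q ↔ x.1 ∈ P ∧ x.2.2 ∈ Q :=
  TwoSidedIdeal.mem_mk' _ _ _ _ _ _ x

/-- Projection of an ideal of `Tri S M R` to the third component. -/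
def proj3 (A : TwoSidedIdeal (Tri S M R)) : TwoSidedIdeal R :=
  TwoSidedIdeal.mk' {r | ∃ s m, ((s, m, r) : Tri S M R) ∈ A}
    ⟨0, 0, A.zero_mem⟩
    (by rintro a b ⟨s, m, h⟩ ⟨s', m', h'⟩; exact ⟨s + s', m + m', A.add_mem h h'⟩)
    (by rintro a ⟨s, m, h⟩; exact ⟨-s, -m, A.neg_mem h⟩)
    (by
      rintro t a ⟨s, m, h⟩
      refine ⟨0, 0, ?_⟩
      have h2 := A.mul_mem_left (0, 0, t) (s, m, a) h
      have e : ((0, 0, t) : Tri S M R) * (s, m, a) = (0, 0, t * a) := by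
        simp [tri_mul]
      rwa [e] at h2)
    (by
      rintro a t ⟨s, m, h⟩
      refine ⟨0, op t • m, ?_⟩
      have h2 := A.mul_mem_right (s, m, a) (0, 0, t) h
      have e : ((s, m, a) : Tri S M R) * (0, 0, t) = (0, op t • m, a * t) := by
        simp [tri_mul]
      rwa [e] at h2)

lemma mem_proj3 {A : TwoSidedIdeal (Tri S M R)} {r : R} :
    r ∈ proj3 A ↔ ∃ s m, ((s, m, r) : Tri S M R) ∈ A :=
  TwoSidedIdeal.mem_mk' _ _ _ _ _ _ r

/-- Projection of an ideal of `Tri S M R` to the first component. -/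
def proj1 (A : TwoSidedIdeal (Tri S M R)) : TwoSidedIdeal S :=
  TwoSidedIdeal.mk' {s | ∃ m r, ((s, m, r) : Tri S M R) ∈ A}
    ⟨0, 0, A.zero_mem⟩
    (by rintro a b ⟨m, r, h⟩ ⟨m', r', h'⟩; exact ⟨m + m', r + r', A.add_mem h h'⟩)
    (by rintro a ⟨m, r, h⟩; exact ⟨-m, -r, A.neg_mem h⟩)
    (by
      rintro t a ⟨m, r, h⟩
      refine ⟨t • m, 0, ?_⟩
      have h2 := A.mul_mem_left (t, 0, 0) (a, m, r) h
      have e : ((t, 0, 0) : Tri S M R) * (a, m, r) = (t * a, t • m, 0) := by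
        simp [tri_mul]
      rwa [e] at h2)
    (by
      rintro a t ⟨m, r, h⟩
      refine ⟨0, 0, ?_⟩
      have h2 := A.mul_mem_right (a, m, r) (t, 0, 0) h
      have e : ((a, m, r) : Tri S M R) * (t, 0, 0) = (a * t, 0, 0) := by
        simp [tri_mul]
      rwa [e] at h2)

lemma mem_proj1 {A : TwoSidedIdeal (Tri S M R)} {s : S} :
    s ∈ proj1 A ↔ ∃ m r, ((s, m, r) : Tri S M R) ∈ A :=
  TwoSidedIdeal.mem_mk' _ _ _ _ _ _ s

end Aux

/-- Lemma 4.6: an ideal `J = [[I, N], [0, L]]` of the generalized triangular matrix ring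
`T = [[S, M], [0, R]]` is a prime ideal iff `N = M` and either (`I = S` and `L` is prime
in `R`) or (`L = R` and `I` is prime in `S`). -/
theorem stmt10 {S M R : Type*} [Ring S] [Ring R] [AddCommGroup M]
    [Module S M] [Module Rᵐᵒᵖ M] [SMulCommClass S Rᵐᵒᵖ M]
    (I : TwoSidedIdeal S) (L : TwoSidedIdeal R) (N : Set M)
    (hN0 : (0 : M) ∈ N) (hNadd : ∀ m ∈ N, ∀ m' ∈ N, m + m' ∈ N)
    (hNsmulS : ∀ s : S, ∀ m ∈ N, s • m ∈ N)
    (hNsmulR : ∀ r : R, ∀ m ∈ N, op r • m ∈ N)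
    (hIM : ∀ s ∈ I, ∀ m : M, s • m ∈ N)
    (hML : ∀ m : M, ∀ r ∈ L, op r • m ∈ N)
    (J : TwoSidedIdeal (Tri S M R))
    (hJ : (J : Set (Tri S M R)) = {x : Tri S M R | x.1 ∈ I ∧ x.2.1 ∈ N ∧ x.2.2 ∈ L}) :
    IsPrimeTSI J ↔ N = Set.univ ∧
      ((I = ⊤ ∧ IsPrimeTSI L) ∨ (L = ⊤ ∧ IsPrimeTSI I)) := by
  have hJmem : ∀ x : Tri S M R, x ∈ J ↔ x.1 ∈ I ∧ x.2.1 ∈ N ∧ x.2.2 ∈ L := by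
    intro x
    rw [← SetLike.mem_coe, hJ]
    rfl
  constructor
  · rintro ⟨hJne, hJpr⟩
    -- First, N = univ
    have hNuniv : N = Set.univ := by
      have hKK : ∀ a ∈ triIdeal (M := M) I L, ∀ b ∈ triIdeal (M := M) I L,
          a * b ∈ J := by
        intro a ha b hb
        rw [mem_triIdeal] at ha hb
        rw [hJmem, tri_mul]
        exact ⟨I.mul_mem_right _ _ ha.1,
          hNadd _ (hIM _ ha.1 _) _ (hML _ _ hb.2), L.mul_mem_left _ _ hb.2⟩
      have hKle : triIdeal (M := M) I L ≤ J := by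
        rcases hJpr _ _ hKK with h | h <;> exact h
      ext m
      simp only [Set.mem_univ, iff_true]
      have : ((0, m, 0) : Tri S M R) ∈ triIdeal (M := M) I L :=
        mem_triIdeal.mpr ⟨I.zero_mem, L.zero_mem⟩
      exact ((hJmem _).mp (hKle this)).2.1
    refine ⟨hNuniv, ?_⟩
    -- Either I = ⊤ or L = ⊤
    have hXY : ∀ a ∈ triIdeal (M := M) ⊤ L, ∀ b ∈ triIdeal (M := M) I ⊤,
        a * b ∈ J := by
      intro a ha b hb
      rw [mem_triIdeal] at ha hb
      rw [hJmem, tri_mul]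
      exact ⟨I.mul_mem_left _ _ hb.1, hNuniv ▸ Set.mem_univ _, L.mul_mem_right _ _ ha.2⟩
    have hLneTop : I = ⊤ → L ≠ ⊤ := by
      rintro hI rfl
      refine hJne (TwoSidedIdeal.eq_top J ?_)
      rw [hJmem]
      exact ⟨hI ▸ TwoSidedIdeal.mem_top _, hNuniv ▸ Set.mem_univ _, TwoSidedIdeal.mem_top _⟩
    have hIneTop : L = ⊤ → I ≠ ⊤ := by
      rintro hL rfl
      refine hJne (TwoSidedIdeal.eq_top J ?_)
      rw [hJmem]
      exact ⟨TwoSidedIdeal.mem_top _, hNuniv ▸ Set.mem_univ _, hL ▸ TwoSidedIdeal.mem_top _⟩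
    rcases hJpr _ _ hXY with h | h
    · -- X ≤ J forces I = ⊤; then L is prime
      have hI : I = ⊤ := by
        refine TwoSidedIdeal.eq_top I ?_
        have : ((1, 0, 0) : Tri S M R) ∈ triIdeal (M := M) ⊤ L :=
          mem_triIdeal.mpr ⟨TwoSidedIdeal.mem_top _, L.zero_mem⟩
        exact ((hJmem _).mp (h this)).1
      refine Or.inl ⟨hI, hLneTop hI, ?_⟩
      intro A B hAB
      have hAB' : ∀ a ∈ triIdeal (M := M) ⊤ A, ∀ b ∈ triIdeal (M := M) ⊤ B,
          a * b ∈ J := by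
        intro a ha b hb
        rw [mem_triIdeal] at ha hb
        rw [hJmem, tri_mul]
        exact ⟨hI ▸ TwoSidedIdeal.mem_top _, hNuniv ▸ Set.mem_univ _, hAB _ ha.2 _ hb.2⟩
      rcases hJpr _ _ hAB' with h' | h'
      · refine Or.inl fun r hr => ?_
        have : ((0, 0, r) : Tri S M R) ∈ triIdeal (M := M) ⊤ A :=
          mem_triIdeal.mpr ⟨TwoSidedIdeal.mem_top _, hr⟩
        exact ((hJmem _).mp (h' this)).2.2
      · refine Or.inr fun r hr => ?_
        have : ((0, 0, r) : Tri S M R) ∈ triIdeal (M := M) ⊤ B :=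
          mem_triIdeal.mpr ⟨TwoSidedIdeal.mem_top _, hr⟩
        exact ((hJmem _).mp (h' this)).2.2
    · -- Y ≤ J forces L = ⊤; then I is prime
      have hL : L = ⊤ := by
        refine TwoSidedIdeal.eq_top L ?_
        have : ((0, 0, 1) : Tri S M R) ∈ triIdeal (M := M) I ⊤ :=
          mem_triIdeal.mpr ⟨I.zero_mem, TwoSidedIdeal.mem_top _⟩
        exact ((hJmem _).mp (h this)).2.2
      refine Or.inr ⟨hL, hIneTop hL, ?_⟩
      intro A B hAB
      have hAB' : ∀ a ∈ triIdeal (M := M) A ⊤, ∀ b ∈ triIdeal (M := M) B ⊤,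
          a * b ∈ J := by
        intro a ha b hb
        rw [mem_triIdeal] at ha hb
        rw [hJmem, tri_mul]
        exact ⟨hAB _ ha.1 _ hb.1, hNuniv ▸ Set.mem_univ _, hL ▸ TwoSidedIdeal.mem_top _⟩
      rcases hJpr _ _ hAB' with h' | h'
      · refine Or.inl fun s hs => ?_
        have : ((s, 0, 0) : Tri S M R) ∈ triIdeal (M := M) A ⊤ :=
          mem_triIdeal.mpr ⟨hs, TwoSidedIdeal.mem_top _⟩
        exact ((hJmem _).mp (h' this)).1
      · refine Or.inr fun s hs => ?_
        have : ((s, 0, 0) : Tri S M R) ∈ triIdeal (M := M) B ⊤ :=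
          mem_triIdeal.mpr ⟨hs, TwoSidedIdeal.mem_top _⟩
        exact ((hJmem _).mp (h' this)).1
  · rintro ⟨hNuniv, h | h⟩
    · obtain ⟨hI, hLne, hLpr⟩ := h
      constructor
      · intro hJtop
        refine hLne (TwoSidedIdeal.eq_top L ?_)
        exact ((hJmem (0, 0, 1)).mp (hJtop ▸ TwoSidedIdeal.mem_top _)).2.2
      · intro A B hAB
        have hproj : ∀ a ∈ proj3 A, ∀ b ∈ proj3 B, a * b ∈ L := by
          intro a ha b hb
          obtain ⟨s, m, hx⟩ := mem_proj3.mp ha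
          obtain ⟨s', m', hy⟩ := mem_proj3.mp hb
          exact ((hJmem _).mp (hAB _ hx _ hy)).2.2
        rcases hLpr _ _ hproj with h' | h'
        · refine Or.inl fun x hx => (hJmem x).mpr
            ⟨hI ▸ TwoSidedIdeal.mem_top _, hNuniv ▸ Set.mem_univ _,
              h' (mem_proj3.mpr ⟨x.1, x.2.1, hx⟩)⟩
        · refine Or.inr fun x hx => (hJmem x).mpr
            ⟨hI ▸ TwoSidedIdeal.mem_top _, hNuniv ▸ Set.mem_univ _,
              h' (mem_proj3.mpr ⟨x.1, x.2.1, hx⟩)⟩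
    · obtain ⟨hL, hIne, hIpr⟩ := h
      constructor
      · intro hJtop
        refine hIne (TwoSidedIdeal.eq_top I ?_)
        exact ((hJmem (1, 0, 0)).mp (hJtop ▸ TwoSidedIdeal.mem_top _)).1
      · intro A B hAB
        have hproj : ∀ a ∈ proj1 A, ∀ b ∈ proj1 B, a * b ∈ I := by
          intro a ha b hb
          obtain ⟨m, r, hx⟩ := mem_proj1.mp ha
          obtain ⟨m', r', hy⟩ := mem_proj1.mp hb
          exact ((hJmem _).mp (hAB _ hx _ hy)).1
        rcases hIpr _ _ hproj with h' | h'
        · refine Or.inl fun x hx => (hJmem x).mpr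
            ⟨h' (mem_proj1.mpr ⟨x.2.1, x.2.2, hx⟩), hNuniv ▸ Set.mem_univ _,
              hL ▸ TwoSidedIdeal.mem_top _⟩
        · refine Or.inr fun x hx => (hJmem x).mpr
            ⟨h' (mem_proj1.mpr ⟨x.2.1, x.2.2, hx⟩), hNuniv ▸ Set.mem_univ _,
              hL ▸ TwoSidedIdeal.mem_top _⟩
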